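/- arXiv:0904.1902 — 5 statements merged into one kernel-verified Lean document; each statement's English description precedes it below -/
import Mathlib

section
/- Let G be a finite connected simple graph, T a spanning tree of G, and B a biconnected component of G. Then for any two vertices u and v of B, every vertex on the unique path from u to v in T belongs to B. -/
open SimpleGraph

/-- `H` is a biconnected subgraph of `G`: it is connected and has no cut vertex,
i.e. removing any single vertex leaves it connected. -/
def IsBiconnected {V : Type} (G : SimpleGraph V) (H : G.Subgraph) : Prop :=
  H.coe.Connected ∧ ∀ v ∈ H.verts, ((H.deleteVerts {v}).coe).Connected

/-- `H` is a biconnected component (block) of `G`: a maximal biconnected subgraph. -/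
def IsBiconnectedComponent {V : Type} (G : SimpleGraph V) (H : G.Subgraph) : Prop :=
  IsBiconnected G H ∧ ∀ H' : G.Subgraph, IsBiconnected G H' → H ≤ H' → H' = H

/-! A path `P` of `G` joining two vertices `u`, `v` of a block `B` can be glued onto `B`
without losing biconnectivity: for any vertex `x`, `B - x` is connected, and `P - x` consists
of at most two subpaths, each of which still meets `B - x` (at `u`, resp. `v`). By maximality
`B ⊔ P = B`. -/

namespace SimpleGraph

variable {V : Type*} {G : SimpleGraph V}

namespace Subgraph

theorem deleteVerts_sup (H K : G.Subgraph) (s : Set V) :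
    (H ⊔ K).deleteVerts s = H.deleteVerts s ⊔ K.deleteVerts s := by
  ext x y
  · simp [Set.union_sdiff_distrib]
  · simp only [deleteVerts_adj, sup_adj, verts_sup, Set.mem_union]
    grind [Subgraph.edge_vert, Subgraph.Adj.symm]

theorem deleteVerts_singleton_of_notMem {H : G.Subgraph} {x : V} (hx : x ∉ H.verts) :
    H.deleteVerts {x} = H := by
  rw [← deleteVerts_inter_verts_left_eq, Set.inter_singleton_eq_empty.mpr hx, deleteVerts_empty]

end Subgraph

namespace Walk

theorem IsPath.connected_toSubgraph_deleteVerts_end {a x : V} {q : G.Walk a x}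
    (hq : q.IsPath) (hne : a ≠ x) : (q.toSubgraph.deleteVerts {x}).Connected := by
  obtain ⟨y, hxy, r, hr⟩ := exists_eq_cons_of_ne hne.symm q.reverse
  have hxr : x ∉ r.support := ((cons_isPath_iff _ _).mp (hr ▸ hq.reverse)).2
  have hq_eq : q.toSubgraph = G.subgraphOfAdj hxy ⊔ r.toSubgraph := by
    rw [← toSubgraph_reverse, hr]
    rfl
  have hxr' : x ∉ r.toSubgraph.verts := by rwa [mem_verts_toSubgraph]
  refine r.toSubgraph_connected.mono ?_ ?_
  · rw [← Subgraph.deleteVerts_singleton_of_notMem hxr', hq_eq]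
    exact Subgraph.deleteVerts_mono le_sup_right
  · ext w
    simp only [hq_eq, Subgraph.deleteVerts_verts, Subgraph.verts_sup, subgraphOfAdj_verts,
      verts_toSubgraph]
    grind [start_mem_support]

theorem IsPath.connected_deleteVerts_sup_toSubgraph {H : G.Subgraph} {a x : V} {q : G.Walk a x}
    (hq : q.IsPath) (hH : (H.deleteVerts {x}).Connected) (ha : a ∈ H.verts) :
    ((H ⊔ q.toSubgraph).deleteVerts {x}).Connected := by
  rw [Subgraph.deleteVerts_sup]
  by_cases hax : a = x
  · subst hax
    rw [(isPath_iff_nil.mp hq).eq_nil]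
    convert hH using 1
    ext <;> simp
  · exact Subgraph.connected_sup hH.preconnected
      (hq.connected_toSubgraph_deleteVerts_end hax).preconnected
      ⟨a, ⟨ha, hax⟩, q.start_mem_verts_toSubgraph, hax⟩

end Walk

end SimpleGraph

section Biconnected

variable {V : Type} {G : SimpleGraph V}

theorem IsBiconnected.connected_deleteVerts {H : G.Subgraph}
    (hH : IsBiconnected G H) (x : V) : (H.deleteVerts {x}).Connected := by
  by_cases hx : x ∈ H.verts
  · exact ⟨hH.2 x hx⟩
  · rw [Subgraph.deleteVerts_singleton_of_notMem hx]
    exact ⟨hH.1⟩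

theorem IsBiconnected.sup_toSubgraph {H : G.Subgraph}
    (hH : IsBiconnected G H) {u v : V} (hu : u ∈ H.verts) (hv : v ∈ H.verts)
    {p : G.Walk u v} (hp : p.IsPath) : IsBiconnected G (H ⊔ p.toSubgraph) := by
  refine ⟨(Subgraph.connected_sup ⟨hH.1.preconnected⟩ p.toSubgraph_connected.preconnected
    ⟨u, hu, p.start_mem_verts_toSubgraph⟩).coe, fun x hx => ?_⟩
  rw [← Subgraph.connected_iff']
  classical
  by_cases hxp : x ∈ p.support
  · have hsplit : p.toSubgraph =
        (p.takeUntil x hxp).toSubgraph ⊔ (p.dropUntil x hxp).reverse.toSubgraph := by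
      rw [Walk.toSubgraph_reverse, ← Walk.toSubgraph_append, Walk.take_spec]
    rw [hsplit, ← sup_assoc]
    exact (hp.dropUntil hxp).reverse.connected_deleteVerts_sup_toSubgraph
      ((hp.takeUntil hxp).connected_deleteVerts_sup_toSubgraph (hH.connected_deleteVerts x) hu)
      (.inl hv)
  · have hxp' : x ∉ p.toSubgraph.verts := by rwa [Walk.mem_verts_toSubgraph]
    rw [Subgraph.deleteVerts_sup, Subgraph.deleteVerts_singleton_of_notMem hxp']
    exact Subgraph.connected_sup (hH.connected_deleteVerts x).preconnected
      p.toSubgraph_connected.preconnected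
      ⟨u, ⟨hu, fun h => hxp (h ▸ p.start_mem_support)⟩, p.start_mem_verts_toSubgraph⟩

theorem IsBiconnectedComponent.mem_verts_of_mem_support {B : G.Subgraph}
    (hB : IsBiconnectedComponent G B) {u v : V} (hu : u ∈ B.verts) (hv : v ∈ B.verts)
    {p : G.Walk u v} (hp : p.IsPath) {w : V} (hw : w ∈ p.support) : w ∈ B.verts := by
  rw [← hB.2 _ (hB.1.sup_toSubgraph hu hv hp) le_sup_left]
  exact .inr (p.mem_verts_toSubgraph.mpr hw)

end Biconnected

theorem block_closed_under_tree_paths_general {V : Type}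
    (G : SimpleGraph V)
    (T : SimpleGraph V) (hTG : T ≤ G)
    (B : G.Subgraph) (hB : IsBiconnectedComponent G B)
    (u v : V) (hu : u ∈ B.verts) (hv : v ∈ B.verts)
    (p : T.Walk u v) (hp : p.IsPath) :
    ∀ w ∈ p.support, w ∈ B.verts := by
  have hedges : ∀ e ∈ p.edges, e ∈ G.edgeSet :=
    fun _ he => edgeSet_mono hTG (p.edges_subset_edgeSet he)
  intro w hw
  exact hB.mem_verts_of_mem_support hu hv (hp.transfer hedges)
    ((p.support_transfer hedges).symm ▸ hw)

/-- Let `G` be a finite connected simple graph, `T` a spanning tree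
of `G`, and `B` a biconnected component of `G`. Then for any two vertices `u` and `v`
of `B`, every vertex on the unique path from `u` to `v` in `T` belongs to `B`. -/
theorem block_closed_under_tree_paths {V : Type} [Fintype V]
    (G : SimpleGraph V) (hG : G.Connected)
    (T : SimpleGraph V) (hTG : T ≤ G) (hT : T.IsTree)
    (B : G.Subgraph) (hB : IsBiconnectedComponent G B)
    (u v : V) (hu : u ∈ B.verts) (hv : v ∈ B.verts)
    (p : T.Walk u v) (hp : p.IsPath) :
    ∀ w ∈ p.support, w ∈ B.verts :=
  block_closed_under_tree_paths_general G T hTG B hB u v hu hv p hp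
end

section
/- Let G = (V,E) be a finite connected simple graph and s ∈ V. For every i ≥ 1 and every layering class C ⊆ L^i, all vertices of L^{i-1} that are adjacent in G to some vertex of C belong to a single layering class of L^{i-1}. -/
/-!
Pick a neighbour `u₀` of a vertex of `C` one step closer to `s`, and let `D` be its layering
class. If `u` at level `i - 1` is adjacent to `c ∈ C`, go from `u₀` into `C`, through `C` along
the path witnessing layering-equivalence (which stays at levels `≥ i`), and out of `c` to `u`:
every vertex of this walk is at level `≥ i - 1`, so `u` is layering-equivalent to `u₀`.
-/

open SimpleGraph

/-- `u` and `v` are layering-equivalent w.r.t. source `s`: they lie at the same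
distance `i` from `s` and are joined by a path all of whose (intermediate)
vertices are at distance at least `i` from `s`. -/
def LayerEquiv {V : Type} (G : SimpleGraph V) (s u v : V) : Prop :=
  G.dist s u = G.dist s v ∧
    ∃ p : G.Walk u v, p.IsPath ∧ ∀ w ∈ p.support, G.dist s u ≤ G.dist s w

/-- The layering class of the vertex `v` w.r.t. source `s`. -/
def layeringClassOf {V : Type} (G : SimpleGraph V) (s v : V) : Set V :=
  {u | LayerEquiv G s v u}

/-- `C` is a layering class of `G` w.r.t. source `s`. -/
def IsLayeringClass {V : Type} (G : SimpleGraph V) (s : V) (C : Set V) : Prop :=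
  ∃ v, C = layeringClassOf G s v

namespace SimpleGraph

variable {V : Type} {G : SimpleGraph V} {s v : V}

lemma exists_adj_dist_add_one_eq (h : G.dist s v ≠ 0) :
    ∃ u, G.Adj u v ∧ G.dist s u + 1 = G.dist s v := by
  obtain ⟨p, hp⟩ := exists_walk_of_dist_ne_zero h
  have hnil : ¬p.Nil := fun hn => h (hp ▸ hn.length_eq_zero)
  have hadj := p.adj_penultimate hnil
  refine ⟨p.penultimate, hadj, ?_⟩
  have hle : G.dist s p.penultimate ≤ p.length - 1 := by
    simpa [Walk.length_dropLast] using G.dist_le p.dropLast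
  rcases hadj.diff_dist_adj (u := s) with hd | hd | hd <;> omega

end SimpleGraph

namespace LayerEquiv

variable {V : Type} {G : SimpleGraph V} {s u u' v v' : V}

lemma refl (G : SimpleGraph V) (s v : V) : LayerEquiv G s v v :=
  ⟨rfl, .nil, .nil, by simp⟩

lemma of_walk (huv : G.dist s u = G.dist s v) (p : G.Walk u v)
    (hp : ∀ w ∈ p.support, G.dist s u ≤ G.dist s w) : LayerEquiv G s u v := by
  classical
  exact ⟨huv, p.bypass, p.bypass_isPath, fun w hw => hp w (p.support_bypass_subset_support hw)⟩

lemma of_adj_of_adj (h : LayerEquiv G s v v') (hu : G.Adj u v) (hu' : G.Adj u' v')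
    (hdu : G.dist s u = G.dist s u') (hdv : G.dist s u ≤ G.dist s v) :
    LayerEquiv G s u u' := by
  obtain ⟨-, p, -, hp⟩ := h
  refine of_walk hdu (.cons hu (p.concat hu'.symm)) fun w hw => ?_
  simp only [Walk.support_cons, Walk.support_concat, List.mem_cons, List.mem_append,
    List.not_mem_nil, or_false] at hw
  rcases hw with rfl | hw | rfl
  · exact le_rfl
  · exact hdv.trans (hp w hw)
  · exact hdu.le

end LayerEquiv

theorem parents_in_single_layering_class_general {V : Type}
    (G : SimpleGraph V) (s : V)
    (i : ℕ) (hi : 1 ≤ i) (C : Set V)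
    (hC : IsLayeringClass G s C) (hCi : ∀ v ∈ C, G.dist s v = i) :
    ∃ D : Set V, IsLayeringClass G s D ∧ (∀ w ∈ D, G.dist s w = i - 1) ∧
      ∀ u : V, G.dist s u = i - 1 → (∃ c ∈ C, G.Adj u c) → u ∈ D := by
  obtain ⟨v₀, rfl⟩ := hC
  have hv₀ : G.dist s v₀ = i := hCi v₀ (LayerEquiv.refl G s v₀)
  obtain ⟨u₀, hu₀v₀, hdu₀⟩ := exists_adj_dist_add_one_eq (show G.dist s v₀ ≠ 0 by omega)
  refine ⟨layeringClassOf G s u₀, ⟨u₀, rfl⟩, fun w hw => by have := hw.1; omega, ?_⟩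
  rintro u hdu ⟨c, hc, huc⟩
  exact hc.of_adj_of_adj hu₀v₀ huc (by omega) (by omega)

/-- For every `i ≥ 1` and every layering class `C ⊆ L^i`, all
vertices of `L^(i-1)` that are adjacent in `G` to some vertex of `C` belong to a
single layering class of `L^(i-1)`. -/
theorem parents_in_single_layering_class {V : Type} [Fintype V]
    (G : SimpleGraph V) (hG : G.Connected) (s : V)
    (i : ℕ) (hi : 1 ≤ i) (C : Set V)
    (hC : IsLayeringClass G s C) (hCi : ∀ v ∈ C, G.dist s v = i) :
    ∃ D : Set V, IsLayeringClass G s D ∧ (∀ w ∈ D, G.dist s w = i - 1) ∧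
      ∀ u : V, G.dist s u = i - 1 → (∃ c ∈ C, G.Adj u c) → u ∈ D :=
  parents_in_single_layering_class_general G s i hi C hC hCi
end

section
/- Let G = (V,E) be a finite connected simple graph and s ∈ V, and let S be the BFS-layering tree decomposition of G with respect to s (the layering graph H with the bag of each layering class C of layer i ≥ 1 being C ∪ parent(C), and the bag of {s} being {s}). Then the length of S is at most 3·tl(G) + 1; that is, any two vertices lying in a common bag of S are at distance at most 3·tl(G) + 1 in G. -/
open SimpleGraph

/-- A tree decomposition of a graph `G`, with decomposition tree indexed by `ι`. -/
structure TreeDecomp {V : Type} (G : SimpleGraph V) (ι : Type) : Type where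
  /-- the decomposition tree -/
  tree : SimpleGraph ι
  /-- the decomposition tree is a tree -/
  isTree : tree.IsTree
  /-- the bags -/
  bag : ι → Set V
  /-- every vertex of `G` belongs to some bag -/
  bag_cover : ∀ v : V, ∃ t, v ∈ bag t
  /-- both endpoints of every edge of `G` lie in a common bag -/
  bag_edge : ∀ ⦃u v : V⦄, G.Adj u v → ∃ t, u ∈ bag t ∧ v ∈ bag t
  /-- the nodes whose bag contains a given vertex induce a connected subtree -/
  bag_conn : ∀ v : V, (tree.induce {t | v ∈ bag t}).Connected

/-- `G` has a tree decomposition all of whose bags have diameter at most `ℓ` in `G`. -/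
def HasTDLength {V : Type} (G : SimpleGraph V) (ℓ : ℕ) : Prop :=
  ∃ (ι : Type) (td : TreeDecomp G ι), ∀ t, ∀ u ∈ td.bag t, ∀ v ∈ td.bag t, G.dist u v ≤ ℓ

/-- The tree-length of `G`: the minimum length over all tree decompositions of `G`. -/
noncomputable def treeLength {V : Type} (G : SimpleGraph V) : ℕ :=
  sInf {ℓ | HasTDLength G ℓ}

/-- The layering graph `H`: vertices are the layering classes, two distinct
classes being adjacent iff `G` has an edge with one endpoint in each. -/
def layeringGraph {V : Type} (G : SimpleGraph V) (s : V) :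
    SimpleGraph {C : Set V // IsLayeringClass G s C} where
  Adj C D := C ≠ D ∧ ∃ u ∈ C.1, ∃ w ∈ D.1, G.Adj u w
  symm := by
    constructor
    rintro C D ⟨hne, u, hu, w, hw, h⟩
    exact ⟨hne.symm, w, hw, u, hu, h.symm⟩
  loopless := by constructor; rintro C ⟨hne, -⟩; exact hne rfl

/-!
Fix a tree decomposition of `G` of length `ℓ` and a walk `p` from `u` to `v` that stays at
distance at least `m` from `s`. The nodes whose bags meet a walk form a subtree, and the subtrees
of a geodesic `s ⟶ u`, of `p` and of a geodesic `v ⟶ s` pairwise intersect (at `u`, `v` and `s`),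
so by the Helly property of subtrees one bag contains a vertex `a` of the first geodesic, `c` of
`p` and `b` of the second. Then `m ≤ d(s,c) ≤ d(s,a) + ℓ`, `m ≤ d(s,b) + ℓ`, and routing through
`a` and `b` gives `d(u,v) + 2m ≤ d(s,u) + d(s,v) + 3ℓ`. Two vertices of one layering class are at
distance `i` from `s` and joined by such a walk with `m = i`, so they are at distance at most
`3ℓ`; for a class and its parent, gluing two such walks along an edge between the classes gives
`m = i - 1` and the bound `3ℓ + 1`.
-/

namespace SimpleGraph

variable {ι : Type} {T : SimpleGraph ι}

lemma exists_walk_support_subset_of_connected_induce {S : Set ι} (hS : (T.induce S).Connected)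
    {a b : ι} (ha : a ∈ S) (hb : b ∈ S) : ∃ p : T.Walk a b, ∀ x ∈ p.support, x ∈ S := by
  obtain ⟨w⟩ := hS ⟨a, ha⟩ ⟨b, hb⟩
  refine ⟨w.map (Embedding.induce S).toHom, fun x hx => ?_⟩
  obtain ⟨⟨y, hy⟩, -, rfl⟩ := List.mem_map.mp (Walk.support_map _ w ▸ hx)
  exact hy

-- `m` is the first vertex of `p` on `q`.
lemma Walk.IsPath.exists_isPath_through_mem_support_inter [DecidableEq ι] {a b c : ι}
    {p : T.Walk a b} (q : T.Walk b c) (hp : p.IsPath) :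
    ∃ m ∈ p.support, m ∈ q.support ∧ ∃ w : T.Walk a c, w.IsPath ∧ m ∈ w.support ∧
      ∀ x ∈ w.support, x ∈ p.support ∨ x ∈ q.support := by
  induction p with
  | nil =>
    exact ⟨_, Walk.start_mem_support _, q.start_mem_support, q.bypass, q.bypass_isPath,
      q.bypass.start_mem_support, fun x hx => .inr (q.support_bypass_subset_support hx)⟩
  | @cons a a' b h p' ih =>
    by_cases ha : a ∈ q.support
    · refine ⟨a, p'.cons h |>.start_mem_support, ha, (q.dropUntil a ha).bypass,
        Walk.bypass_isPath _, Walk.start_mem_support _, fun x hx => .inr ?_⟩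
      exact q.support_dropUntil_subset_support ha (Walk.support_bypass_subset_support _ hx)
    · have ha' : a ∉ p'.support := (Walk.cons_isPath_iff h p').mp hp |>.2
      obtain ⟨m, hmp, hmq, w, hw, hmw, hwpq⟩ := ih q hp.of_cons
      refine ⟨m, by simp [hmp], hmq, w.cons h,
        hw.cons fun haw => (hwpq a haw).elim ha' ha, by simp [hmw], fun x hx => ?_⟩
      rcases List.mem_cons.mp (Walk.support_cons h w ▸ hx) with rfl | hx
      · simp
      · exact (hwpq x hx).imp_left (by simp +contextual)

lemma IsAcyclic.inter_nonempty_of_pairwise_inter_nonempty (hT : T.IsAcyclic)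
    {S₁ S₂ S₃ : Set ι} (h₁ : (T.induce S₁).Connected) (h₂ : (T.induce S₂).Connected)
    (h₃ : (T.induce S₃).Connected) (h₁₂ : (S₁ ∩ S₂).Nonempty) (h₂₃ : (S₂ ∩ S₃).Nonempty)
    (h₁₃ : (S₁ ∩ S₃).Nonempty) : (S₁ ∩ S₂ ∩ S₃).Nonempty := by
  classical
  obtain ⟨t₁₂, ht₁₂⟩ := h₁₂
  obtain ⟨t₂₃, ht₂₃⟩ := h₂₃
  obtain ⟨t₁₃, ht₁₃⟩ := h₁₃
  obtain ⟨p, hp⟩ := exists_walk_support_subset_of_connected_induce h₂ ht₁₂.2 ht₂₃.1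
  obtain ⟨q, hq⟩ := exists_walk_support_subset_of_connected_induce h₃ ht₂₃.2 ht₁₃.2
  obtain ⟨r, hr⟩ := exists_walk_support_subset_of_connected_induce h₁ ht₁₂.1 ht₁₃.1
  obtain ⟨m, hmp, hmq, w, hw, hmw, -⟩ :=
    p.bypass_isPath.exists_isPath_through_mem_support_inter q
  have hwr : w = r.bypass :=
    congrArg Subtype.val (hT.subsingleton_path _ _ |>.elim ⟨w, hw⟩ ⟨_, r.bypass_isPath⟩)
  refine ⟨m, ⟨hr m ?_, hp m (p.support_bypass_subset_support hmp)⟩, hq m hmq⟩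
  exact r.support_bypass_subset_support (hwr ▸ hmw)

end SimpleGraph

namespace TreeDecomp

variable {V ι : Type} {G : SimpleGraph V} (td : TreeDecomp G ι)

lemma connected_induce_bags_meeting_support {a b : V} (p : G.Walk a b) :
    (td.tree.induce {t | ∃ x ∈ p.support, x ∈ td.bag t}).Connected := by
  induction p with
  | @nil u =>
    convert td.bag_conn u using 2 <;> simp
  | @cons a b c h p ih =>
    have hunion : {t | ∃ x ∈ (p.cons h).support, x ∈ td.bag t}
        = {t | a ∈ td.bag t} ∪ {t | ∃ x ∈ p.support, x ∈ td.bag t} := by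
      ext t; simp
    obtain ⟨t, hat, hbt⟩ := td.bag_edge h
    rw [hunion]
    exact induce_union_connected (td.bag_conn a).preconnected ih.preconnected
      ⟨t, hat, b, p.start_mem_support, hbt⟩

lemma exists_bag_meeting_supports {x y z : V} (p : G.Walk x y) (q : G.Walk y z)
    (r : G.Walk x z) : ∃ t, (∃ a ∈ p.support, a ∈ td.bag t) ∧ (∃ b ∈ q.support, b ∈ td.bag t) ∧
      ∃ c ∈ r.support, c ∈ td.bag t := by
  obtain ⟨tx, htx⟩ := td.bag_cover x
  obtain ⟨ty, hty⟩ := td.bag_cover y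
  obtain ⟨tz, htz⟩ := td.bag_cover z
  obtain ⟨t, ⟨hpt, hqt⟩, hrt⟩ := td.isTree.isAcyclic.inter_nonempty_of_pairwise_inter_nonempty
    (td.connected_induce_bags_meeting_support p) (td.connected_induce_bags_meeting_support q)
    (td.connected_induce_bags_meeting_support r)
    ⟨ty, ⟨y, p.end_mem_support, hty⟩, y, q.start_mem_support, hty⟩
    ⟨tz, ⟨z, q.end_mem_support, htz⟩, z, r.end_mem_support, htz⟩
    ⟨tx, ⟨x, p.start_mem_support, htx⟩, x, r.start_mem_support, htx⟩
  exact ⟨t, hpt, hqt, hrt⟩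

end TreeDecomp

namespace SimpleGraph

variable {V : Type} {G : SimpleGraph V}

lemma Walk.dist_add_dist_le_length [DecidableEq V] {u v a : V} (p : G.Walk u v)
    (ha : a ∈ p.support) : G.dist u a + G.dist a v ≤ p.length := by
  calc G.dist u a + G.dist a v
      ≤ (p.takeUntil a ha).length + (p.dropUntil a ha).length :=
        Nat.add_le_add (dist_le _) (dist_le _)
    _ = p.length := by rw [← Walk.length_append, p.take_spec ha]

lemma HasTDLength.dist_add_two_mul_le (hG : G.Connected) {ℓ m : ℕ} (hℓ : HasTDLength G ℓ)
    {s u v : V} (p : G.Walk u v) (hp : ∀ w ∈ p.support, m ≤ G.dist s w) :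
    G.dist u v + 2 * m ≤ G.dist s u + G.dist s v + 3 * ℓ := by
  classical
  obtain ⟨ι, td, hbag⟩ := hℓ
  obtain ⟨qu, hqu⟩ := hG.exists_walk_length_eq_dist s u
  obtain ⟨qv, hqv⟩ := hG.exists_walk_length_eq_dist s v
  obtain ⟨t, ⟨a, haq, hat⟩, ⟨c, hcp, hct⟩, ⟨b, hbq, hbt⟩⟩ :=
    td.exists_bag_meeting_supports qu p qv
  have hsau : G.dist s a + G.dist a u ≤ G.dist s u := hqu ▸ qu.dist_add_dist_le_length haq
  have hsbv : G.dist s b + G.dist b v ≤ G.dist s v := hqv ▸ qv.dist_add_dist_le_length hbq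
  have hmc : m ≤ G.dist s c := hp c hcp
  have hsca : G.dist s c ≤ G.dist s a + G.dist a c := hG.dist_triangle
  have hscb : G.dist s c ≤ G.dist s b + G.dist b c := hG.dist_triangle
  have huav : G.dist u v ≤ G.dist a u + G.dist a v := dist_comm (u := u) ▸ hG.dist_triangle
  have havb : G.dist a v ≤ G.dist a b + G.dist b v := hG.dist_triangle
  have hac := hbag t a hat c hct
  have hab := hbag t a hat b hbt
  have hbc := hbag t b hbt c hct
  omega

lemma hasTDLength_diam [Finite V] (hG : G.Connected) : HasTDLength G G.diam := by
  have : Nonempty V := hG.nonempty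
  have hbag_conn (v : V) : ((⊥ : SimpleGraph Unit).induce {_t | v ∈ Set.univ}).Connected :=
    have : Nonempty {_t : Unit | v ∈ Set.univ} := ⟨⟨(), trivial⟩⟩
    IsTree.of_subsingleton.connected
  exact ⟨Unit, ⟨⊥, .of_subsingleton, fun _ => Set.univ, fun _ => ⟨(), trivial⟩,
    fun _ _ _ => ⟨(), trivial, trivial⟩, hbag_conn⟩,
    fun _ _ _ _ _ => dist_le_diam (connected_iff_ediam_ne_top.mp hG)⟩

lemma hasTDLength_treeLength [Finite V] (hG : G.Connected) : HasTDLength G (treeLength G) :=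
  Nat.sInf_mem (s := {ℓ | HasTDLength G ℓ}) ⟨_, hasTDLength_diam hG⟩

end SimpleGraph

section Layering

variable {V : Type} {G : SimpleGraph V} {s : V}

lemma exists_walk_of_mem_layeringClassOf {a u v : V} (hu : u ∈ layeringClassOf G s a)
    (hv : v ∈ layeringClassOf G s a) : G.dist s u = G.dist s v ∧
      ∃ p : G.Walk u v, ∀ w ∈ p.support, G.dist s u ≤ G.dist s w := by
  obtain ⟨hau, pu, -, hpu⟩ := hu
  obtain ⟨hav, pv, -, hpv⟩ := hv
  refine ⟨hau.symm.trans hav, pu.reverse.append pv, fun w hw => hau ▸ ?_⟩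
  rw [Walk.mem_support_append_iff, Walk.support_reverse, List.mem_reverse] at hw
  exact hw.elim (hpu w) (hpv w)

lemma dist_le_of_mem_layeringClass (hG : G.Connected) {ℓ : ℕ} (hℓ : HasTDLength G ℓ)
    {C : Set V} (hC : IsLayeringClass G s C) {u v : V} (hu : u ∈ C) (hv : v ∈ C) :
    G.dist u v ≤ 3 * ℓ := by
  obtain ⟨a, rfl⟩ := hC
  obtain ⟨hsuv, p, hp⟩ := exists_walk_of_mem_layeringClassOf hu hv
  have := hℓ.dist_add_two_mul_le hG p hp
  omega

lemma dist_le_of_layeringGraph_adj (hG : G.Connected) {ℓ : ℕ} (hℓ : HasTDLength G ℓ)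
    {C D : {C : Set V // IsLayeringClass G s C}} (hCD : (layeringGraph G s).Adj C D)
    {x y : V} (hx : x ∈ C.1) (hy : y ∈ D.1) (hxy : G.dist s y + 1 = G.dist s x) :
    G.dist x y ≤ 3 * ℓ + 1 := by
  obtain ⟨-, x', hx', y', hy', hx'y'⟩ := hCD
  obtain ⟨C, a, rfl⟩ := C
  obtain ⟨D, b, rfl⟩ := D
  obtain ⟨hsxx', p, hp⟩ := exists_walk_of_mem_layeringClassOf hx hx'
  obtain ⟨hsy'y, q, hq⟩ := exists_walk_of_mem_layeringClassOf hy' hy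
  have hfar : ∀ w ∈ (p.append (q.cons hx'y')).support, G.dist s y ≤ G.dist s w := by
    intro w hw
    simp only [Walk.mem_support_append_iff, Walk.support_cons, List.mem_cons] at hw
    rcases hw with hw | rfl | hw
    · exact (hp w hw).trans' (by omega)
    · omega
    · exact (hq w hw).trans' (by omega)
  have := hℓ.dist_add_two_mul_le hG _ hfar
  omega

end Layering

/-- The length of the BFS-layering tree decomposition `S` of `G`
with respect to `s` is at most `3 · tl(G) + 1`: any two vertices lying in a common
bag of `S` are at distance at most `3 · tl(G) + 1` in `G`. -/
theorem layering_tree_decomposition_length {V : Type} [Fintype V]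
    (G : SimpleGraph V) (hG : G.Connected) (s : V)
    (P : {C : Set V // IsLayeringClass G s C} → {C : Set V // IsLayeringClass G s C})
    (hP : ∀ C, s ∉ C.1 → (layeringGraph G s).Adj C (P C) ∧
      ∀ v ∈ C.1, ∀ w ∈ (P C).1, G.dist s w + 1 = G.dist s v)
    (B : {C : Set V // IsLayeringClass G s C} → Set V)
    (hBroot : ∀ C, s ∈ C.1 → B C = {s})
    (hBne : ∀ C, s ∉ C.1 → B C = C.1 ∪ (P C).1) :
    ∀ C, ∀ u ∈ B C, ∀ v ∈ B C, G.dist u v ≤ 3 * treeLength G + 1 := by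
  intro C u hu v hv
  have hℓ := hasTDLength_treeLength hG
  by_cases hs : s ∈ C.1
  · rw [hBroot C hs, Set.mem_singleton_iff] at hu hv
    rw [hu, hv, dist_self]
    exact Nat.zero_le _
  obtain ⟨hadj, hdist⟩ := hP C hs
  have hparent : ∀ x ∈ C.1, ∀ y ∈ (P C).1, G.dist x y ≤ 3 * treeLength G + 1 :=
    fun x hx y hy => dist_le_of_layeringGraph_adj hG hℓ hadj hx hy (hdist x hx y hy)
  rw [hBne C hs] at hu hv
  rcases hu with hu | hu <;> rcases hv with hv | hv
  · exact (dist_le_of_mem_layeringClass hG hℓ C.2 hu hv).trans (by omega)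
  · exact hparent u hu v hv
  · exact dist_comm (u := v) ▸ hparent v hv u hu
  · exact (dist_le_of_mem_layeringClass hG hℓ (P C).2 hu hv).trans (by omega)
end

section
/- Let G be a finite connected simple graph with maximum degree at most d and tree-length at most t. Then the tree-width of G satisfies tw(G) ≤ 2·(Σ_{m=0}^{3t+1} d^m) − 1. In particular, any class of graphs of bounded degree and bounded tree-length has bounded tree-width. -/
open SimpleGraph

/-- `G` has a tree decomposition all of whose bags have at most `k + 1` vertices. -/
def HasTDWidth {V : Type} (G : SimpleGraph V) (k : ℕ) : Prop :=
  ∃ (ι : Type) (td : TreeDecomp G ι), ∀ t, (td.bag t).ncard ≤ k + 1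

/-- The tree-width of `G`: the minimum width over all tree decompositions of `G`. -/
noncomputable def treewidth {V : Type} (G : SimpleGraph V) : ℕ :=
  sInf {k | HasTDWidth G k}

/-- The trivial one-node tree decomposition with a single bag containing all vertices. -/
def trivDecomp {V : Type} (G : SimpleGraph V) : TreeDecomp G Unit where
  tree := ⊥
  isTree := by
    refine ⟨?_, SimpleGraph.isAcyclic_bot⟩
    rw [SimpleGraph.connected_iff]
    exact ⟨fun a b => by cases a; cases b; exact Reachable.refl _, ⟨()⟩⟩
  bag := fun _ => Set.univ
  bag_cover := fun v => ⟨(), trivial⟩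
  bag_edge := fun u v _ => ⟨(), trivial, trivial⟩
  bag_conn := fun v => by
    rw [SimpleGraph.connected_iff]
    refine ⟨fun a b => ?_, ⟨⟨(), Set.mem_univ v⟩⟩⟩
    obtain ⟨⟨⟩, ha⟩ := a
    obtain ⟨⟨⟩, hb⟩ := b
    exact Reachable.refl _

open Classical in
/-- The sphere of radius `m` around `v` has at most `d ^ m` vertices. -/
lemma sphere_card_le {V : Type} [Fintype V] (G : SimpleGraph V) (hG : G.Connected)
    (d : ℕ) (hdeg : ∀ v : V, (G.neighborSet v).ncard ≤ d) (v : V) :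
    ∀ m : ℕ, (Finset.univ.filter (fun u => G.dist v u = m)).card ≤ d ^ m := by
  intro m
  induction m with
  | zero =>
    have hsub : Finset.univ.filter (fun u => G.dist v u = 0) ⊆ {v} := by
      intro u hu
      simp only [Finset.mem_filter] at hu
      have := (hG.dist_eq_zero_iff).mp hu.2
      simp [this]
    calc (Finset.univ.filter (fun u => G.dist v u = 0)).card
        ≤ ({v} : Finset V).card := Finset.card_le_card hsub
      _ ≤ d ^ 0 := by simp
  | succ m ih =>
    have hsub : Finset.univ.filter (fun u => G.dist v u = m + 1) ⊆
        (Finset.univ.filter (fun u => G.dist v u = m)).biUnion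
          (fun w => G.neighborFinset w) := by
      intro u hu
      simp only [Finset.mem_filter] at hu
      obtain ⟨q, hq⟩ := (hG.preconnected u v).exists_walk_length_eq_dist
      have hqu : q.length = m + 1 := by rw [hq, G.dist_comm, hu.2]
      cases q with
      | nil => simp at hqu
      | cons h q' =>
        rename_i b
        simp only [SimpleGraph.Walk.length_cons, Nat.add_right_cancel_iff] at hqu
        have hvb_le : G.dist v b ≤ m := by
          have := SimpleGraph.dist_le q'.reverse
          rwa [SimpleGraph.Walk.length_reverse, hqu] at this
        have hbu : G.dist b u ≤ 1 := by
          have := SimpleGraph.dist_le h.symm.toWalk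
          simpa using this
        have hge : m ≤ G.dist v b := by
          have htri := hG.dist_triangle (u := v) (v := b) (w := u)
          omega
        have hvb : G.dist v b = m := le_antisymm hvb_le hge
        simp only [Finset.mem_biUnion, Finset.mem_filter, SimpleGraph.mem_neighborFinset]
        exact ⟨b, ⟨Finset.mem_univ _, hvb⟩, h.symm⟩
    have hdegF : ∀ w : V, (G.neighborFinset w).card ≤ d := by
      intro w
      have := hdeg w
      rwa [Set.ncard_eq_toFinset_card'] at this
    calc (Finset.univ.filter (fun u => G.dist v u = m + 1)).card
        ≤ ((Finset.univ.filter (fun u => G.dist v u = m)).biUnion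
            (fun w => G.neighborFinset w)).card := Finset.card_le_card hsub
      _ ≤ ∑ w ∈ Finset.univ.filter (fun u => G.dist v u = m),
            (G.neighborFinset w).card := Finset.card_biUnion_le
      _ ≤ ∑ _w ∈ Finset.univ.filter (fun u => G.dist v u = m), d :=
            Finset.sum_le_sum (fun w _ => hdegF w)
      _ = (Finset.univ.filter (fun u => G.dist v u = m)).card * d := by
            rw [Finset.sum_const, smul_eq_mul]
      _ ≤ d ^ m * d := Nat.mul_le_mul_right d ih
      _ = d ^ (m + 1) := (pow_succ d m).symm

open Classical in
/-- The ball of radius `n` around `v` has at most `∑_{m ≤ n} d ^ m` vertices. -/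
lemma ball_card_le {V : Type} [Fintype V] (G : SimpleGraph V) (hG : G.Connected)
    (d : ℕ) (hdeg : ∀ v : V, (G.neighborSet v).ncard ≤ d) (v : V) (n : ℕ) :
    (Finset.univ.filter (fun u => G.dist v u ≤ n)).card ≤
      ∑ m ∈ Finset.range (n + 1), d ^ m := by
  have hsub : Finset.univ.filter (fun u => G.dist v u ≤ n) ⊆
      (Finset.range (n + 1)).biUnion
        (fun m => Finset.univ.filter (fun u => G.dist v u = m)) := by
    intro u hu
    simp only [Finset.mem_filter] at hu
    simp only [Finset.mem_biUnion, Finset.mem_range, Finset.mem_filter]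
    exact ⟨G.dist v u, by omega, Finset.mem_univ _, rfl⟩
  calc (Finset.univ.filter (fun u => G.dist v u ≤ n)).card
      ≤ ((Finset.range (n + 1)).biUnion
          (fun m => Finset.univ.filter (fun u => G.dist v u = m))).card :=
        Finset.card_le_card hsub
    _ ≤ ∑ m ∈ Finset.range (n + 1),
          (Finset.univ.filter (fun u => G.dist v u = m)).card := Finset.card_biUnion_le
    _ ≤ ∑ m ∈ Finset.range (n + 1), d ^ m :=
        Finset.sum_le_sum (fun m _ => sphere_card_le G hG d hdeg v m)

/-- Let `G` be a finite connected simple graph with maximum degree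
at most `d` and tree-length at most `t`. Then
`tw(G) ≤ 2 · (∑_{m=0}^{3t+1} d^m) − 1`. -/
theorem treewidth_le_of_bounded_degree_treeLength {V : Type} [Fintype V]
    (G : SimpleGraph V) (hG : G.Connected) (d t : ℕ)
    (hdeg : ∀ v : V, (G.neighborSet v).ncard ≤ d)
    (htl : treeLength G ≤ t) :
    treewidth G ≤ 2 * (∑ m ∈ Finset.range (3 * t + 2), d ^ m) - 1 := by
  classical
  -- the set of achievable lengths is nonempty
  have hne : {ℓ | HasTDLength G ℓ}.Nonempty := by
    refine ⟨Finset.univ.sup (fun p : V × V => G.dist p.1 p.2), Unit, trivDecomp G, ?_⟩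
    intro x u _ v _
    exact Finset.le_sup (f := fun p : V × V => G.dist p.1 p.2) (Finset.mem_univ (u, v))
  obtain ⟨ι, td, hlen⟩ : HasTDLength G (treeLength G) := Nat.sInf_mem hne
  set K := ∑ m ∈ Finset.range (3 * t + 2), d ^ m with hK
  have hK1 : 1 ≤ K := by
    have := Finset.single_le_sum (f := fun m => d ^ m)
      (fun i _ => Nat.zero_le _) (Finset.mem_range.mpr (show 0 < 3 * t + 2 by omega))
    simpa [hK] using this
  apply Nat.sInf_le
  refine ⟨ι, td, fun x => ?_⟩
  have h2 : 2 * K - 1 + 1 = 2 * K := by omega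
  rw [h2]
  by_cases hb : (td.bag x).Nonempty
  · obtain ⟨v, hv⟩ := hb
    have hsub : (td.bag x).toFinset ⊆ Finset.univ.filter (fun u => G.dist v u ≤ t) := by
      intro u hu
      rw [Set.mem_toFinset] at hu
      simp only [Finset.mem_filter]
      exact ⟨Finset.mem_univ _, le_trans (hlen x v hv u hu) htl⟩
    calc (td.bag x).ncard = (td.bag x).toFinset.card := Set.ncard_eq_toFinset_card' _
      _ ≤ (Finset.univ.filter (fun u => G.dist v u ≤ t)).card := Finset.card_le_card hsub
      _ ≤ ∑ m ∈ Finset.range (t + 1), d ^ m := ball_card_le G hG d hdeg v t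
      _ ≤ K := Finset.sum_le_sum_of_subset
          (Finset.range_subset_range.mpr (by omega))
      _ ≤ 2 * K := by omega
  · rw [Set.not_nonempty_iff_eq_empty] at hb
    simp [hb]
end

section
/- For every n ≥ 3, the cycle graph C_n on n vertices has tree-length exactly ⌈n/3⌉. -/
/-!
Upper bound: with `k = ⌈n/3⌉`, cut the cycle at `0`, `k` and `n - k`. The three arcs are the
leaves and the three cut points the centre of a star-shaped tree decomposition, and every one
of these bags has diameter at most `k`.

Lower bound: split the cycle into three consecutive arcs of `⌊n/3⌋`, `⌊(n+1)/3⌋` and `⌊(n+2)/3⌋`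
vertices. In a tree decomposition, the median of three bags containing the edges between
consecutive arcs separates them in the tree, so its bag meets all three arcs. If that bag had
diameter `ℓ` with `3ℓ < n`, each of the three gaps between the chosen vertices would be at most
`ℓ` (the complementary part of the cycle being longer than `ℓ`), yet the gaps add up to `n`.
-/

open SimpleGraph

namespace SimpleGraph

variable {V : Type*} {G : SimpleGraph V}

theorem Walk.isPath_append {u v w : V} {p : G.Walk u v} {q : G.Walk v w} (hp : p.IsPath)
    (hq : q.IsPath) (hpq : ∀ x ∈ p.support, x ∈ q.support → x = v) : (p.append q).IsPath := by
  have hq' := hq.support_nodup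
  rw [← q.cons_tail_support, List.nodup_cons] at hq'
  rw [Walk.isPath_def, Walk.support_append, List.nodup_append]
  refine ⟨hp.support_nodup, hq'.2, fun x hx y hy hxy => ?_⟩
  subst hxy
  have hxv := hpq x hx (q.cons_tail_support ▸ List.mem_cons_of_mem _ hy)
  exact hq'.1 (hxv ▸ hy)

theorem Walk.exists_eq_append_of_exists_mem {u v : V} (p : G.Walk u v) {S : Set V}
    (h : ∃ x ∈ p.support, x ∈ S) :
    ∃ m ∈ S, ∃ (p₁ : G.Walk u m) (p₂ : G.Walk m v),
      p = p₁.append p₂ ∧ ∀ x ∈ p₁.support, x ∈ S → x = m := by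
  induction p with
  | nil => exact ⟨_, by simpa using h, .nil, .nil, rfl, by simp⟩
  | @cons u c v hadj q ih =>
    by_cases hu : u ∈ S
    · exact ⟨u, hu, .nil, .cons hadj q, rfl, by simp⟩
    have hq : ∃ x ∈ q.support, x ∈ S := by
      obtain ⟨x, hx, hxS⟩ := h
      rw [Walk.support_cons, List.mem_cons] at hx
      exact ⟨x, hx.resolve_left (by rintro rfl; exact hu hxS), hxS⟩
    obtain ⟨m, hm, p₁, p₂, rfl, hfirst⟩ := ih hq
    refine ⟨m, hm, .cons hadj p₁, p₂, rfl, fun x hx hxS => ?_⟩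
    rw [Walk.support_cons, List.mem_cons] at hx
    exact hx.elim (by rintro rfl; exact absurd hxS hu) (hfirst x · hxS)

theorem IsTree.mem_support_of_isPath (hG : G.IsTree) {u v m : V} {p : G.Walk u v}
    (hp : p.IsPath) (hm : m ∈ p.support) (w : G.Walk u v) : m ∈ w.support := by
  classical
  have : w.bypass = p := (hG.existsUnique_path u v).unique w.bypass_isPath hp
  exact w.support_bypass_subset_support (this ▸ hm)

/-- The median of `t₁`, `t₂`, `t₃` is the first vertex of the `t₁`–`t₂` path on the
`t₂`–`t₃` path. -/
theorem IsTree.exists_median (hG : G.IsTree) (t₁ t₂ t₃ : V) :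
    ∃ m, (∀ w : G.Walk t₁ t₂, m ∈ w.support) ∧ (∀ w : G.Walk t₂ t₃, m ∈ w.support) ∧
      ∀ w : G.Walk t₃ t₁, m ∈ w.support := by
  classical
  obtain ⟨P, hP⟩ := (hG.existsUnique_path t₂ t₃).exists
  obtain ⟨Q, hQ⟩ := (hG.existsUnique_path t₁ t₂).exists
  obtain ⟨m, hmP, Q₁, Q₂, rfl, hfirst⟩ := Q.exists_eq_append_of_exists_mem
    (S := {x | x ∈ P.support}) ⟨t₂, Q.end_mem_support, P.start_mem_support⟩
  have hR : (Q₁.append (P.dropUntil m hmP)).IsPath :=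
    Walk.isPath_append hQ.of_append_left (hP.dropUntil hmP) fun x hx hxP =>
      hfirst x hx (P.support_dropUntil_subset_support hmP hxP)
  refine ⟨m, hG.mem_support_of_isPath hQ (by simp), hG.mem_support_of_isPath hP hmP, fun w => ?_⟩
  simpa using hG.mem_support_of_isPath hR (by simp) w.reverse

theorem Walk.le_add_length {f : V → ℕ} (hf : ∀ ⦃u v⦄, G.Adj u v → f u ≤ f v + 1) {u v : V}
    (w : G.Walk u v) : f u ≤ f v + w.length := by
  induction w with
  | nil => simp
  | cons h _ ih => rw [Walk.length_cons]; linarith [hf h]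

theorem Reachable.le_add_dist {f : V → ℕ} (hf : ∀ ⦃u v⦄, G.Adj u v → f u ≤ f v + 1) {u v : V}
    (h : G.Reachable u v) : f u ≤ f v + G.dist u v := by
  obtain ⟨w, hw⟩ := h.exists_walk_length_eq_dist
  exact hw ▸ w.le_add_length hf

theorem connected_induce_starGraph {r : V} {S : Set V} (hS : S.Nonempty)
    (h : r ∈ S ∨ S.Subsingleton) : ((starGraph r).induce S).Connected := by
  rcases h with hr | hsub
  · refine .of_isUniversal (v := ⟨r, hr⟩) fun w hw => ?_
    simpa [Subtype.ext_iff] using hw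
  · have : Subsingleton S := hsub.coe_sort
    have : Nonempty S := hS.to_subtype
    exact { preconnected := .of_subsingleton }

section CycleGraph

variable {n : ℕ}

theorem cycleGraph_adj_iff_val (hn : 2 ≤ n) {u v : Fin n} :
    (cycleGraph n).Adj u v ↔ v.val = u.val + 1 ∨ u.val = v.val + 1 ∨
      (u.val = 0 ∧ v.val = n - 1) ∨ (v.val = 0 ∧ u.val = n - 1) := by
  have hsub (a b : Fin n) : (a - b).val = 1 ↔ a.val = b.val + 1 ∨ (a.val = 0 ∧ b.val = n - 1) := by
    rcases le_or_gt b a with h | h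
    · rw [Fin.sub_val_of_le h]
      have := a.isLt
      omega
    · rw [Fin.coe_sub_iff_lt.mpr h]
      omega
  rw [cycleGraph_adj', hsub, hsub]
  omega

theorem cycleGraph_exists_walk_of_val_le {a b : Fin n} (hab : a.val ≤ b.val) :
    ∃ w : (cycleGraph n).Walk a b, w.length = b.val - a.val ∧
      ∀ x ∈ w.support, a.val ≤ x.val ∧ x.val ≤ b.val := by
  obtain ⟨b, hb⟩ := b
  induction b with
  | zero =>
    obtain rfl : a = ⟨0, hb⟩ := Fin.ext (Nat.le_zero.mp hab)
    exact ⟨.nil, rfl, by simp⟩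
  | succ b ih =>
    rcases hab.eq_or_lt with h | h
    · obtain rfl : a = ⟨b + 1, hb⟩ := Fin.ext h
      exact ⟨.nil, by simp, by simp⟩
    obtain ⟨w, hlen, hsupp⟩ := ih (by omega) (Nat.le_of_lt_succ h)
    have hadj : (cycleGraph n).Adj ⟨b, by omega⟩ ⟨b + 1, hb⟩ :=
      (cycleGraph_adj_iff_val (by omega)).2 (.inl rfl)
    refine ⟨w.concat hadj, by simp only [Walk.length_concat, hlen] at h ⊢; omega, fun x hx => ?_⟩
    simp only [Walk.support_concat, List.mem_append, List.mem_singleton] at hx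
    rcases hx with hx | rfl
    · exact ⟨(hsupp x hx).1, (hsupp x hx).2.trans (Nat.le_succ b)⟩
    · exact ⟨h.le, le_rfl⟩

theorem cycleGraph_dist_of_val_le (hn : 2 ≤ n) {a b : Fin n} (hab : a.val ≤ b.val) :
    (cycleGraph n).dist a b = min (b.val - a.val) (n - (b.val - a.val)) := by
  refine le_antisymm (le_min ?_ ?_) ?_
  · obtain ⟨w, hw, -⟩ := cycleGraph_exists_walk_of_val_le hab
    exact hw ▸ dist_le w
  · obtain ⟨w₁, hw₁, -⟩ := cycleGraph_exists_walk_of_val_le (a := b) (b := ⟨n - 1, by omega⟩)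
      (Nat.le_sub_one_of_lt b.isLt)
    obtain ⟨w₂, hw₂, -⟩ :=
      cycleGraph_exists_walk_of_val_le (a := ⟨0, by omega⟩) (b := a) (Nat.zero_le _)
    have hadj : (cycleGraph n).Adj ⟨n - 1, by omega⟩ ⟨0, by omega⟩ :=
      (cycleGraph_adj_iff_val hn).2 (.inr (.inr (.inr ⟨rfl, rfl⟩)))
    rw [dist_comm]
    refine (dist_le (w₁.append (.cons hadj w₂))).trans ?_
    simp only [Walk.length_append, Walk.length_cons, hw₁, hw₂]
    omega
  · -- `f x` is the cyclic distance from `x` to `b`; it changes by at most one along an edge.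
    let f (x : Fin n) : ℕ :=
      min (x.val - b.val + (b.val - x.val)) (n - (x.val - b.val + (b.val - x.val)))
    have hf : ∀ ⦃u v⦄, (cycleGraph n).Adj u v → f u ≤ f v + 1 := fun u v huv => by
      rw [cycleGraph_adj_iff_val hn] at huv
      have := b.isLt
      simp only [f]
      omega
    have := (cycleGraph_preconnected a b).le_add_dist hf
    simp only [f] at this
    omega

end CycleGraph

end SimpleGraph

namespace TreeDecomp

variable {V ι : Type} {G : SimpleGraph V}

def ofStar (center : Set V) (leaf : ι → Set V) (cover : ∀ v, ∃ i, v ∈ leaf i)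
    (edge : ∀ ⦃u v⦄, G.Adj u v → ∃ i, u ∈ leaf i ∧ v ∈ leaf i)
    (overlap : ∀ v i j, v ∈ leaf i → v ∈ leaf j → i ≠ j → v ∈ center) :
    TreeDecomp G (Option ι) where
  tree := starGraph none
  isTree := isTree_starGraph none
  bag t := t.elim center leaf
  bag_cover v := (cover v).elim fun i h => ⟨some i, h⟩
  bag_edge _ _ h := (edge h).elim fun i h => ⟨some i, h⟩
  bag_conn v := by
    refine connected_induce_starGraph ((cover v).elim fun i h => ⟨some i, h⟩) ?_
    by_cases hv : v ∈ center
    · exact .inl hv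
    refine .inr ?_
    rintro (_ | i) hi (_ | j) hj
    · rfl
    · exact absurd hi hv
    · exact absurd hj hv
    · by_contra hij
      exact hv (overlap v i j hi hj (by simpa using hij))

theorem exists_walk_of_mem_bag (td : TreeDecomp G ι) {v : V} {s t : ι} (hs : v ∈ td.bag s)
    (ht : v ∈ td.bag t) : ∃ w : td.tree.Walk s t, ∀ y ∈ w.support, v ∈ td.bag y := by
  obtain ⟨w⟩ := (td.bag_conn v).preconnected ⟨s, hs⟩ ⟨t, ht⟩
  refine ⟨w.map (Embedding.induce _).toHom, fun y hy => ?_⟩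
  obtain ⟨⟨y, hvy⟩, _, rfl⟩ := List.mem_map.mp (Walk.support_map _ w ▸ hy)
  exact hvy

theorem exists_mem_support_mem_bag (td : TreeDecomp G ι) {m s t : ι}
    (hsep : ∀ w : td.tree.Walk s t, m ∈ w.support) {u v : V} (hu : u ∈ td.bag s)
    (hv : v ∈ td.bag t) (w : G.Walk u v) : ∃ x ∈ w.support, x ∈ td.bag m := by
  induction w generalizing s with
  | nil =>
    obtain ⟨w', hw'⟩ := td.exists_walk_of_mem_bag hu hv
    exact ⟨_, Walk.start_mem_support _, hw' m (hsep w')⟩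
  | @cons u c v hadj q ih =>
    by_cases hum : u ∈ td.bag m
    · exact ⟨u, Walk.start_mem_support _, hum⟩
    obtain ⟨s', hus', hcs'⟩ := td.bag_edge hadj
    have hsep' (w' : td.tree.Walk s' t) : m ∈ w'.support := by
      obtain ⟨w₁, hw₁⟩ := td.exists_walk_of_mem_bag hu hus'
      have := hsep (w₁.append w')
      rw [Walk.mem_support_append_iff] at this
      exact this.resolve_left fun h => hum (hw₁ m h)
    obtain ⟨x, hx, hxm⟩ := ih hsep' hcs' hv
    exact ⟨x, by simp [hx], hxm⟩

theorem exists_bag_meets_three_walks (td : TreeDecomp G ι) {a₁ b₁ a₂ b₂ a₃ b₃ : V}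
    (p₁ : G.Walk a₁ b₁) (p₂ : G.Walk a₂ b₂) (p₃ : G.Walk a₃ b₃)
    (h₁ : G.Adj b₁ a₂) (h₂ : G.Adj b₂ a₃) (h₃ : G.Adj b₃ a₁) :
    ∃ t, (∃ x ∈ p₁.support, x ∈ td.bag t) ∧ (∃ x ∈ p₂.support, x ∈ td.bag t) ∧
      ∃ x ∈ p₃.support, x ∈ td.bag t := by
  obtain ⟨s₁, hb₃, ha₁⟩ := td.bag_edge h₃
  obtain ⟨s₂, hb₁, ha₂⟩ := td.bag_edge h₁
  obtain ⟨s₃, hb₂, ha₃⟩ := td.bag_edge h₂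
  obtain ⟨m, hm₁₂, hm₂₃, hm₃₁⟩ := td.isTree.exists_median s₁ s₂ s₃
  exact ⟨m, td.exists_mem_support_mem_bag hm₁₂ ha₁ hb₁ p₁,
    td.exists_mem_support_mem_bag hm₂₃ ha₂ hb₂ p₂, td.exists_mem_support_mem_bag hm₃₁ ha₃ hb₃ p₃⟩

end TreeDecomp

theorem HasTDLength.mono {V : Type} {G : SimpleGraph V} {ℓ ℓ' : ℕ} (h : HasTDLength G ℓ)
    (hℓ : ℓ ≤ ℓ') : HasTDLength G ℓ' := by
  obtain ⟨ι, td, htd⟩ := h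
  exact ⟨ι, td, fun t u hu v hv => (htd t u hu v hv).trans hℓ⟩

theorem hasTDLength_cycleGraph {n : ℕ} (hn : 2 ≤ n) :
    HasTDLength (cycleGraph n) ((n + 2) / 3) := by
  generalize hk : (n + 2) / 3 = k
  refine ⟨Option (Fin 3), TreeDecomp.ofStar {x | x.val = 0 ∨ x.val = k ∨ x.val = n - k}
      ![{x | x.val ≤ k}, {x | k ≤ x.val ∧ x.val ≤ n - k}, {x | n - k ≤ x.val ∨ x.val = 0}]
      (fun v => ?_) (fun u v huv => ?_) (fun v i j hi hj hij => ?_), ?_⟩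
  · obtain h | h | h :
        v.val ≤ k ∨ (k ≤ v.val ∧ v.val ≤ n - k) ∨ (n - k ≤ v.val ∨ v.val = 0) := by
      omega
    exacts [⟨0, h⟩, ⟨1, h⟩, ⟨2, h⟩]
  · rw [cycleGraph_adj_iff_val hn] at huv
    obtain h | h | h : (u.val ≤ k ∧ v.val ≤ k) ∨
        ((k ≤ u.val ∧ u.val ≤ n - k) ∧ (k ≤ v.val ∧ v.val ≤ n - k)) ∨
        ((n - k ≤ u.val ∨ u.val = 0) ∧ (n - k ≤ v.val ∨ v.val = 0)) := by
      omega
    exacts [⟨0, h⟩, ⟨1, h⟩, ⟨2, h⟩]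
  · fin_cases i <;> fin_cases j <;>
      simp only [Fin.isValue, Fin.reduceFinMk, Matrix.cons_val, Matrix.cons_val_zero,
        Matrix.cons_val_one, Fin.zero_eta, Fin.mk_one, Set.mem_ofPred_eq, ne_eq,
        not_true_eq_false] at hi hj hij ⊢ <;> omega
  · intro t u hu v hv
    wlog huv : u.val ≤ v.val generalizing u v
    · rw [dist_comm]
      exact this v hv u hu (by omega)
    rw [cycleGraph_dist_of_val_le hn huv]
    rcases t with _ | i
    · simp only [TreeDecomp.ofStar, Option.elim_none, Set.mem_ofPred_eq] at hu hv
      omega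
    · fin_cases i <;>
        simp only [TreeDecomp.ofStar, Option.elim_some, Fin.isValue, Fin.reduceFinMk,
          Matrix.cons_val, Matrix.cons_val_zero, Matrix.cons_val_one, Fin.zero_eta, Fin.mk_one,
          Set.mem_ofPred_eq] at hu hv <;> omega

theorem le_three_mul_of_hasTDLength_cycleGraph {n : ℕ} (hn : 3 ≤ n) {ℓ : ℕ}
    (h : HasTDLength (cycleGraph n) ℓ) : n ≤ 3 * ℓ := by
  obtain ⟨ι, td, hℓ⟩ := h
  have hn₂ : 2 ≤ n := by omega
  obtain ⟨p₁, -, hp₁⟩ := cycleGraph_exists_walk_of_val_le (n := n)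
    (a := ⟨0, by omega⟩) (b := ⟨n / 3 - 1, by omega⟩) (Nat.zero_le _)
  obtain ⟨p₂, -, hp₂⟩ := cycleGraph_exists_walk_of_val_le (n := n)
    (a := ⟨n / 3, by omega⟩) (b := ⟨n / 3 + (n + 1) / 3 - 1, by omega⟩) (by dsimp only; omega)
  obtain ⟨p₃, -, hp₃⟩ := cycleGraph_exists_walk_of_val_le (n := n)
    (a := ⟨n / 3 + (n + 1) / 3, by omega⟩) (b := ⟨n - 1, by omega⟩) (by dsimp only; omega)
  obtain ⟨t, ⟨x, hx, hxt⟩, ⟨y, hy, hyt⟩, ⟨z, hz, hzt⟩⟩ := td.exists_bag_meets_three_walks p₁ p₂ p₃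
    ((cycleGraph_adj_iff_val hn₂).2 (by dsimp only; omega))
    ((cycleGraph_adj_iff_val hn₂).2 (by dsimp only; omega))
    ((cycleGraph_adj_iff_val hn₂).2 (by dsimp only; omega))
  have hx := hp₁ x hx
  have hy := hp₂ y hy
  have hz := hp₃ z hz
  dsimp only at hx hy hz
  have hxy := hℓ t x hxt y hyt
  have hyz := hℓ t y hyt z hzt
  have hxz := hℓ t x hxt z hzt
  rw [cycleGraph_dist_of_val_le hn₂ (by omega)] at hxy hyz hxz
  omega

/-- For every `n ≥ 3`, the cycle graph `C_n` on `n` vertices has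
tree-length exactly `⌈n / 3⌉`. -/
theorem treeLength_cycleGraph (n : ℕ) (hn : 3 ≤ n) :
    treeLength (SimpleGraph.cycleGraph n) = ⌈(n : ℚ) / 3⌉₊ := by
  have hceil (ℓ : ℕ) : ⌈(n : ℚ) / 3⌉₊ ≤ ℓ ↔ n ≤ 3 * ℓ := by
    rw [Nat.ceil_le, div_le_iff₀ (by norm_num), mul_comm]
    exact_mod_cast Iff.rfl
  have hupper : HasTDLength (cycleGraph n) ⌈(n : ℚ) / 3⌉₊ :=
    (hasTDLength_cycleGraph (by omega)).mono (by have := (hceil _).1 le_rfl; omega)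
  exact IsLeast.csInf_eq
    ⟨hupper, fun ℓ hℓ => (hceil ℓ).2 (le_three_mul_of_hasTDLength_cycleGraph hn hℓ)⟩
end
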